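/- Let S consist of the unary signature Δ₀ together with the signatures g_k for all k ≥ 1, and let ⟨S⟩ be the tensor closure of S. If f is a signature with f ∉ ⟨S⟩, then there exists a signature g of arity at most 3 with g ∉ ⟨S⟩ such that g is obtained from f by successively pinning variables to constants (possibly zero pinnings, in which case g = f). -/

import Mathlib

/-- Number of `1`s (Hamming weight) of a Boolean string. -/
def wt1 {n : ℕ} (x : Fin n → Bool) : ℕ := (Finset.univ.filter fun i => x i = true).card

/-- The tensor product of two signatures: `(x,y) ↦ f(x)·g(y)`. -/
noncomputable def tensorSig {a b : ℕ} (f : (Fin a → Bool) → ℂ) (g : (Fin b → Bool) → ℂ) :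
    (Fin (a + b) → Bool) → ℂ :=
  fun x => f (fun i => x (Fin.castAdd b i)) * g (fun j => x (Fin.natAdd a j))

/-- Pinning the `i`-th variable of `f` to the constant `c`. -/
noncomputable def pinSig {n : ℕ} (f : (Fin (n + 1) → Bool) → ℂ) (i : Fin (n + 1)) (c : Bool) :
    (Fin n → Bool) → ℂ :=
  fun x => f (i.insertNth c x)

/-- Membership in `S = {Δ₀} ∪ {g_k : k ≥ 1}`: either the unary `Δ₀ = [1,0]`,
or the symmetric arity-`k` signature `g_k` (`k ≥ 1`) with value `2` at Hamming
weight `0`, value `1` at Hamming weight `1`, and value `0` at weight `≥ 2`. -/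
def InS {n : ℕ} (h : (Fin n → Bool) → ℂ) : Prop :=
  (n = 1 ∧ ∀ x, h x = if wt1 x = 0 then 1 else 0) ∨
  (1 ≤ n ∧ ∀ x, h x = if wt1 x = 0 then 2 else if wt1 x = 1 then 1 else 0)

/-- Tensor products of finitely many (at least one) members of `S`. -/
inductive TensorOfS : (m : ℕ) → ((Fin m → Bool) → ℂ) → Prop
  | atom {m : ℕ} {h : (Fin m → Bool) → ℂ} (hs : InS h) : TensorOfS m h
  | tensor {a b : ℕ} {f : (Fin a → Bool) → ℂ} {g : (Fin b → Bool) → ℂ}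
      (hf : TensorOfS a f) (hg : TensorOfS b g) : TensorOfS (a + b) (tensorSig f g)

/-- The tensor closure `⟨S⟩`: signatures that are identically `0` or equal, up
to a nonzero scalar and a permutation of the variables, to a tensor product of
finitely many members of `S`. -/
def InTC {n : ℕ} (f : (Fin n → Bool) → ℂ) : Prop :=
  (∀ x, f x = 0) ∨
  ∃ (c : ℂ), c ≠ 0 ∧ ∃ (σ : Equiv.Perm (Fin n)) (h : (Fin n → Bool) → ℂ),
    TensorOfS n h ∧ ∀ x, f x = c * h (x ∘ σ)

/-- `PinReach n f m g` : the arity-`m` signature `g` is obtained from the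
arity-`n` signature `f` by successively pinning variables to constants
(possibly zero pinnings, in which case `g = f`). -/
inductive PinReach : (n : ℕ) → ((Fin n → Bool) → ℂ) → (m : ℕ) → ((Fin m → Bool) → ℂ) → Prop
  | refl (n : ℕ) (f : (Fin n → Bool) → ℂ) : PinReach n f n f
  | pinStep {n : ℕ} {f : (Fin n → Bool) → ℂ} {m : ℕ} {g : (Fin (m + 1) → Bool) → ℂ}
      (h : PinReach n f (m + 1) g) (i : Fin (m + 1)) (c : Bool) :
      PinReach n f m (pinSig g i c)

/-!
The nonzero members of `⟨S⟩` are exactly the signatures in product form (`IsProductForm`):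
`f x = f 0 · 2^(-|x|)` when `f (e_i + e_j) ≠ 0` for all ones `i, j` of `x`, and `f x = 0`
otherwise, where vanishing of `f (e_i + e_j)` is transitive on the variables with `f e_i ≠ 0`.
Tensor products, scaling and permutations preserve this shape; conversely a product form is
rebuilt in `⟨S⟩` by splitting off one `Δ₀` or `g_k` factor at a time.

Every condition of a product form involves at most three variables. Hence if `f` has arity at
least four and all its pinnings lie in `⟨S⟩`, so does `f`: its value at a point with a zero
coordinate is read off after pinning that coordinate to `0`, its value at the all-ones point after
pinning a variable to `1`, and transitivity after pinning a fourth variable to `0`. So while the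
arity exceeds three some pinning stays outside `⟨S⟩`, and induction on the arity proves the
theorem.
-/

open Finset

def zeroVec (n : ℕ) : Fin n → Bool := fun _ => false

/-- The indicator vector of `{i, j}`, so that `pairVec i i` is the unit vector `e_i`. -/
def pairVec {n : ℕ} (i j : Fin n) : Fin n → Bool := fun k => decide (k = i) || decide (k = j)

section Vectors

variable {m n : ℕ}

@[simp] lemma zeroVec_apply (i : Fin n) : zeroVec n i = false := rfl

@[simp] lemma pairVec_apply (i j k : Fin n) :
    pairVec i j k = (decide (k = i) || decide (k = j)) := rfl

lemma pairVec_comm (i j : Fin n) : pairVec i j = pairVec j i := by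
  funext k; simp [Bool.or_comm]

lemma pairVec_comp_equiv (σ : Fin m ≃ Fin n) (i j : Fin n) :
    pairVec i j ∘ σ = pairVec (σ.symm i) (σ.symm j) := by
  funext k; simp [Equiv.eq_symm_apply]

lemma castAdd_ne_natAdd (i : Fin m) (j : Fin n) : Fin.castAdd n i ≠ Fin.natAdd m j :=
  Fin.ne_of_val_ne (by simp; omega)

lemma wt1_eq_sum (x : Fin n → Bool) : wt1 x = ∑ i, if x i = true then 1 else 0 :=
  card_filter _ _

@[simp] lemma wt1_zeroVec : wt1 (zeroVec n) = 0 := by simp [wt1]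

@[simp] lemma wt1_const_true : wt1 (fun _ : Fin n => true) = n := by simp [wt1]

lemma wt1_eq_zero_iff {x : Fin n → Bool} : wt1 x = 0 ↔ x = zeroVec n := by
  simp [wt1, filter_eq_empty_iff, funext_iff]

@[simp] lemma wt1_pairVec_self (i : Fin n) : wt1 (pairVec i i) = 1 := by
  simp [wt1, Finset.filter_eq']

lemma wt1_pairVec {i j : Fin n} (h : i ≠ j) : wt1 (pairVec i j) = 2 := by
  have : univ.filter (fun k => pairVec i j k = true) = {i, j} := by ext k; simp
  rw [wt1, this, card_pair h]

lemma wt1_pairVec_le_two (i j : Fin n) : wt1 (pairVec i j) ≤ 2 := by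
  rcases eq_or_ne i j with rfl | h
  · simp
  · rw [wt1_pairVec h]

lemma wt1_le_one_iff {x : Fin n → Bool} : wt1 x ≤ 1 ↔ ∀ i j, x i = true → x j = true → i = j := by
  rw [wt1, card_le_one]; simp only [mem_filter, mem_univ, true_and]
  exact ⟨fun h i j hi hj => h i hi j hj, fun h i hi j hj => h i j hi hj⟩

lemma exists_eq_false_of_wt1_lt {x : Fin n → Bool} (h : wt1 x < n) : ∃ i, x i = false := by
  by_contra! hx
  have : x = fun _ => true := funext fun i => by simpa using hx i
  simp [this] at h

lemma wt1_comp_equiv (σ : Fin m ≃ Fin n) (x : Fin n → Bool) : wt1 (x ∘ σ) = wt1 x := by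
  rw [wt1_eq_sum, wt1_eq_sum]
  exact σ.sum_comp (fun i => if x i = true then 1 else 0)

lemma wt1_eq_add (x : Fin (m + n) → Bool) :
    wt1 x = wt1 (x ∘ Fin.castAdd n) + wt1 (x ∘ Fin.natAdd m) := by
  simp only [wt1_eq_sum, Fin.sum_univ_add, Function.comp_apply]

lemma wt1_eq_removeNth (i : Fin (n + 1)) (x : Fin (n + 1) → Bool) :
    wt1 x = (if x i = true then 1 else 0) + wt1 (i.removeNth x) := by
  rw [wt1_eq_sum, wt1_eq_sum, Fin.sum_univ_succAbove _ i]
  rfl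

end Vectors

def Compatible {n : ℕ} (f : (Fin n → Bool) → ℂ) (x : Fin n → Bool) : Prop :=
  ∀ i j, x i = true → x j = true → f (pairVec i j) ≠ 0

/-- The explicit shape of a nonzero member of `⟨S⟩`: the variables `i` with `f e_i = 0` are the
`Δ₀` factors, and on the remaining variables `f (e_i + e_j) = 0` says that `i` and `j` lie in the
same `g_k` factor, so it has to be an equivalence relation. -/
structure IsProductForm {n : ℕ} (f : (Fin n → Bool) → ℂ) : Prop where
  apply_zeroVec_ne_zero : f (zeroVec n) ≠ 0
  apply_of_compatible : ∀ x, Compatible f x → f x = f (zeroVec n) * 2⁻¹ ^ wt1 x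
  apply_of_not_compatible : ∀ x, ¬ Compatible f x → f x = 0
  pairVec_trans : ∀ i j k, i ≠ k → f (pairVec i i) ≠ 0 → f (pairVec j j) ≠ 0 →
    f (pairVec k k) ≠ 0 → f (pairVec i j) = 0 → f (pairVec j k) = 0 → f (pairVec i k) = 0

namespace IsProductForm

variable {m n : ℕ} {f : (Fin n → Bool) → ℂ}

lemma apply_ne_zero_iff (hf : IsProductForm f) {x : Fin n → Bool} :
    f x ≠ 0 ↔ Compatible f x := by
  refine ⟨fun hx => by_contra fun hc => hx (hf.apply_of_not_compatible x hc), fun hc => ?_⟩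
  rw [hf.apply_of_compatible x hc]
  exact mul_ne_zero hf.apply_zeroVec_ne_zero (by simp)

lemma const_mul (hf : IsProductForm f) {c : ℂ} (hc : c ≠ 0) :
    IsProductForm (fun x => c * f x) := by
  have hcompat : ∀ x, Compatible (fun x => c * f x) x ↔ Compatible f x := fun x => by
    simp only [Compatible, ne_eq, mul_eq_zero, hc, false_or]
  refine ⟨mul_ne_zero hc hf.apply_zeroVec_ne_zero, fun x hx => ?_, fun x hx => ?_, ?_⟩
  · rw [hf.apply_of_compatible x ((hcompat x).1 hx), mul_assoc]
  · rw [hf.apply_of_not_compatible x (mt (hcompat x).2 hx), mul_zero]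
  · simpa only [ne_eq, mul_eq_zero, hc, false_or] using hf.pairVec_trans

lemma comp_equiv (hf : IsProductForm f) (σ : Fin n ≃ Fin m) :
    IsProductForm (fun x : Fin m → Bool => f (x ∘ σ)) := by
  have hpair : ∀ i j, f (pairVec i j ∘ σ) = f (pairVec (σ.symm i) (σ.symm j)) := fun i j => by
    rw [pairVec_comp_equiv]
  have hcompat : ∀ x, Compatible (fun x => f (x ∘ σ)) x ↔ Compatible f (x ∘ σ) := fun x => by
    simp only [Compatible, hpair]
    refine ⟨fun h i j hi hj => by simpa using h (σ i) (σ j) hi hj,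
      fun h i j hi hj => h _ _ (by simpa using hi) (by simpa using hj)⟩
  refine ⟨hf.apply_zeroVec_ne_zero, fun x hx => ?_, fun x hx => ?_, ?_⟩
  · rw [hf.apply_of_compatible _ ((hcompat x).1 hx), wt1_comp_equiv]
    rfl
  · exact hf.apply_of_not_compatible _ (mt (hcompat x).2 hx)
  · intro i j k hik
    simp only [hpair]
    exact hf.pairVec_trans _ _ _ (σ.symm.injective.ne hik)

end IsProductForm

lemma isProductForm_delta {f : (Fin 1 → Bool) → ℂ}
    (hf : ∀ x, f x = if wt1 x = 0 then 1 else 0) : IsProductForm f := by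
  have hcompat : ∀ x, Compatible f x ↔ x = zeroVec 1 := fun x => by
    have hx : x = zeroVec 1 ∨ x = pairVec 0 0 := by
      rcases Bool.eq_false_or_eq_true (x 0) with h | h
      · exact Or.inr (funext fun i => by simp [Fin.fin_one_eq_zero i, h])
      · exact Or.inl (funext fun i => by simp [Fin.fin_one_eq_zero i, h])
    rcases hx with rfl | rfl
    · simp [Compatible]
    · simp [Compatible, hf, funext_iff]
  refine ⟨by simp [hf], fun x hx => ?_, fun x hx => ?_, fun i j k hik => ?_⟩
  · rw [(hcompat x).1 hx]; simp
  · rw [hf, if_neg (mt wt1_eq_zero_iff.1 (mt (hcompat x).2 hx))]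
  · exact absurd (Subsingleton.elim i k) hik

lemma pairVec_ne_zero_iff_of_g {n : ℕ} {f : (Fin n → Bool) → ℂ}
    (hf : ∀ x, f x = if wt1 x = 0 then 2 else if wt1 x = 1 then 1 else 0) (i j : Fin n) :
    f (pairVec i j) ≠ 0 ↔ i = j := by
  rcases eq_or_ne i j with rfl | hij
  · simp [hf]
  · simp [hf, wt1_pairVec hij, hij]

lemma isProductForm_g {n : ℕ} {f : (Fin n → Bool) → ℂ}
    (hf : ∀ x, f x = if wt1 x = 0 then 2 else if wt1 x = 1 then 1 else 0) :
    IsProductForm f := by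
  have hcompat : ∀ x, Compatible f x ↔ wt1 x ≤ 1 := fun x => by
    simp only [wt1_le_one_iff, Compatible, pairVec_ne_zero_iff_of_g hf]
  refine ⟨by simp [hf], fun x hx => ?_, fun x hx => ?_, fun i j k hik _ _ _ _ _ => ?_⟩
  · rcases Nat.le_one_iff_eq_zero_or_eq_one.1 ((hcompat x).1 hx) with h | h <;>
      simp [hf, h]
  · rw [hcompat, not_le] at hx
    rw [hf, if_neg (by omega), if_neg (by omega)]
  · exact not_not.1 (mt (pairVec_ne_zero_iff_of_g hf i k).1 hik)

lemma InS.isProductForm {n : ℕ} {f : (Fin n → Bool) → ℂ} (hf : InS f) : IsProductForm f := by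
  rcases hf with ⟨rfl, hf⟩ | ⟨-, hf⟩
  · exact isProductForm_delta hf
  · exact isProductForm_g hf

section Tensor

variable {a b : ℕ} {f : (Fin a → Bool) → ℂ} {g : (Fin b → Bool) → ℂ}

lemma tensorSig_zeroVec : tensorSig f g (zeroVec (a + b)) = f (zeroVec a) * g (zeroVec b) := rfl

lemma tensorSig_pairVec_castAdd_castAdd (u v : Fin a) :
    tensorSig f g (pairVec (Fin.castAdd b u) (Fin.castAdd b v)) =
      f (pairVec u v) * g (zeroVec b) := by
  unfold tensorSig
  congr 2 <;> funext i <;> simp [Ne.symm (castAdd_ne_natAdd _ _)]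

lemma tensorSig_pairVec_natAdd_natAdd (u v : Fin b) :
    tensorSig f g (pairVec (Fin.natAdd a u) (Fin.natAdd a v)) =
      f (zeroVec a) * g (pairVec u v) := by
  unfold tensorSig
  congr 2 <;> funext i <;> simp [castAdd_ne_natAdd]

lemma tensorSig_pairVec_castAdd_natAdd (u : Fin a) (v : Fin b) :
    tensorSig f g (pairVec (Fin.castAdd b u) (Fin.natAdd a v)) =
      f (pairVec u u) * g (pairVec v v) := by
  unfold tensorSig
  congr 2 <;> funext i <;> simp [castAdd_ne_natAdd, Ne.symm (castAdd_ne_natAdd _ _)]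

lemma compatible_iff_of_pairVec {h : (Fin (a + b) → Bool) → ℂ}
    (hL : ∀ u v, h (pairVec (Fin.castAdd b u) (Fin.castAdd b v)) ≠ 0 ↔ f (pairVec u v) ≠ 0)
    (hR : ∀ u v, h (pairVec (Fin.natAdd a u) (Fin.natAdd a v)) ≠ 0 ↔ g (pairVec u v) ≠ 0)
    (hLR : ∀ u v, f (pairVec u u) ≠ 0 → g (pairVec v v) ≠ 0 →
      h (pairVec (Fin.castAdd b u) (Fin.natAdd a v)) ≠ 0)
    (x : Fin (a + b) → Bool) :
    Compatible h x ↔ Compatible f (x ∘ Fin.castAdd b) ∧ Compatible g (x ∘ Fin.natAdd a) := by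
  refine ⟨fun hx => ⟨fun u v hu hv => (hL u v).1 (hx _ _ hu hv),
    fun u v hu hv => (hR u v).1 (hx _ _ hu hv)⟩, fun ⟨hxf, hxg⟩ i j => ?_⟩
  refine Fin.addCases (fun u => ?_) (fun u => ?_) i <;>
    refine Fin.addCases (fun v => ?_) (fun v => ?_) j <;> intro hi hj
  · exact (hL u v).2 (hxf u v hi hj)
  · exact hLR u v (hxf u u hi hi) (hxg v v hj hj)
  · rw [pairVec_comm]; exact hLR v u (hxf v v hj hj) (hxg u u hi hi)
  · exact (hR u v).2 (hxg u v hi hj)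

lemma compatible_tensorSig_iff (hf : f (zeroVec a) ≠ 0) (hg : g (zeroVec b) ≠ 0)
    (x : Fin (a + b) → Bool) :
    Compatible (tensorSig f g) x ↔
      Compatible f (x ∘ Fin.castAdd b) ∧ Compatible g (x ∘ Fin.natAdd a) := by
  refine compatible_iff_of_pairVec (fun u v => ?_) (fun u v => ?_) (fun u v hu hv => ?_) x
  · simp [tensorSig_pairVec_castAdd_castAdd, hg]
  · simp [tensorSig_pairVec_natAdd_natAdd, hf]
  · rw [tensorSig_pairVec_castAdd_natAdd]; exact mul_ne_zero hu hv

lemma IsProductForm.tensorSig (hf : IsProductForm f) (hg : IsProductForm g) :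
    IsProductForm (tensorSig f g) := by
  have hf0 := hf.apply_zeroVec_ne_zero
  have hg0 := hg.apply_zeroVec_ne_zero
  refine ⟨mul_ne_zero hf0 hg0, fun x hx => ?_, fun x hx => ?_, ?_⟩
  · obtain ⟨hxf, hxg⟩ := (compatible_tensorSig_iff hf0 hg0 x).1 hx
    change f (x ∘ Fin.castAdd b) * g (x ∘ Fin.natAdd a) = _
    rw [hf.apply_of_compatible _ hxf, hg.apply_of_compatible _ hxg, tensorSig_zeroVec,
      wt1_eq_add x, pow_add]
    ring
  · change f (x ∘ Fin.castAdd b) * g (x ∘ Fin.natAdd a) = 0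
    rcases not_and_or.1 (mt (compatible_tensorSig_iff hf0 hg0 x).2 hx) with h | h
    · rw [hf.apply_of_not_compatible _ h, zero_mul]
    · rw [hg.apply_of_not_compatible _ h, mul_zero]
  · -- Cross pairs evaluate to `f e_u * g e_v ≠ 0`, so `i, j, k` lie in a single factor.
    intro i j k
    refine Fin.addCases (fun u => ?_) (fun u => ?_) i <;>
      refine Fin.addCases (fun v => ?_) (fun v => ?_) j <;>
      refine Fin.addCases (fun w => ?_) (fun w => ?_) k <;>
      simp only [tensorSig_pairVec_castAdd_castAdd, tensorSig_pairVec_natAdd_natAdd,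
        tensorSig_pairVec_castAdd_natAdd, pairVec_comm (Fin.natAdd a _) (Fin.castAdd b _),
        mul_eq_zero, hf0, hg0, Fin.castAdd_inj, Fin.natAdd_inj, ne_eq, or_false, false_or] <;>
      intros <;> simp_all
    · exact hf.pairVec_trans u v w ‹_› ‹_› ‹_› ‹_› ‹_› ‹_›
    · exact hg.pairVec_trans u v w ‹_› ‹_› ‹_› ‹_› ‹_› ‹_›

end Tensor

lemma TensorOfS.isProductForm {n : ℕ} {f : (Fin n → Bool) → ℂ} (hf : TensorOfS n f) :
    IsProductForm f := by
  induction hf with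
  | atom hs => exact hs.isProductForm
  | tensor _ _ ihf ihg => exact ihf.tensorSig ihg

namespace InTC

variable {a b m n : ℕ} {f : (Fin n → Bool) → ℂ}

lemma isProductForm_of_ne_zero (hf : InTC f) {x : Fin n → Bool} (hx : f x ≠ 0) :
    IsProductForm f := by
  rcases hf with h0 | ⟨c, hc, σ, h, hh, hfh⟩
  · exact absurd (h0 x) hx
  · rw [show f = fun x => c * h (x ∘ σ) from funext hfh]
    exact (hh.isProductForm.comp_equiv σ).const_mul hc

lemma const_mul (hf : InTC f) (c : ℂ) : InTC (fun x => c * f x) := by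
  rcases eq_or_ne c 0 with rfl | hc
  · exact Or.inl fun x => zero_mul _
  rcases hf with h0 | ⟨d, hd, σ, h, hh, hfh⟩
  · exact Or.inl fun x => by simp [h0]
  · exact Or.inr ⟨c * d, mul_ne_zero hc hd, σ, h, hh, fun x => by
    simp only [hfh, mul_assoc]⟩

lemma comp_equiv (hf : InTC f) (e : Fin n ≃ Fin m) : InTC (fun x : Fin m → Bool => f (x ∘ e)) := by
  obtain rfl : n = m := Fin.equiv_iff_eq.1 ⟨e⟩
  rcases hf with h0 | ⟨c, hc, σ, h, hh, hfh⟩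
  · exact Or.inl fun x => h0 _
  · exact Or.inr ⟨c, hc, σ.trans e, h, hh, fun x => hfh _⟩

lemma tensorSig {f : (Fin a → Bool) → ℂ} {g : (Fin b → Bool) → ℂ} (hf : InTC f) (hg : InTC g) :
    InTC (tensorSig f g) := by
  rcases hf with h0 | ⟨c, hc, σ, h, hh, hfh⟩
  · exact Or.inl fun x => by simp [_root_.tensorSig, h0]
  rcases hg with h0 | ⟨d, hd, τ, k, hk, hgk⟩
  · exact Or.inl fun x => by simp [_root_.tensorSig, h0]
  refine Or.inr ⟨c * d, mul_ne_zero hc hd,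
    finSumFinEquiv.symm.trans ((σ.sumCongr τ).trans finSumFinEquiv), _root_.tensorSig h k,
    hh.tensor hk, fun x => ?_⟩
  simp only [_root_.tensorSig, hfh, hgk]
  simp only [Function.comp_def, Equiv.trans_apply, finSumFinEquiv_symm_apply_castAdd,
    finSumFinEquiv_symm_apply_natAdd, Equiv.sumCongr_apply, Sum.map_inl, Sum.map_inr,
    finSumFinEquiv_apply_left, finSumFinEquiv_apply_right]
  ring

lemma tensorSig_arity_zero {f : (Fin a → Bool) → ℂ} (hf : InTC f) (g : (Fin 0 → Bool) → ℂ) :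
    InTC (_root_.tensorSig f g) := by
  have h := (hf.comp_equiv (finCongr (Nat.add_zero a).symm)).const_mul (g Fin.elim0)
  convert h using 2 with x
  rw [_root_.tensorSig, mul_comm]
  congr 2
  exact funext fun i => i.elim0

end InTC

lemma InS.inTC {n : ℕ} {f : (Fin n → Bool) → ℂ} (hf : InS f) : InTC f :=
  Or.inr ⟨1, one_ne_zero, 1, f, .atom hf, fun x => by simp⟩

section LeadingFactor

variable {a b : ℕ} {f : (Fin (a + b) → Bool) → ℂ}

lemma append_zeroVec_zeroVec : Fin.append (zeroVec a) (zeroVec b) = zeroVec (a + b) := by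
  funext i
  refine Fin.addCases (fun w => ?_) (fun w => ?_) i <;> simp

lemma append_zeroVec_pairVec (u v : Fin b) :
    Fin.append (zeroVec a) (pairVec u v) = pairVec (Fin.natAdd a u) (Fin.natAdd a v) := by
  funext i
  refine Fin.addCases (fun w => ?_) (fun w => ?_) i <;>
    simp [castAdd_ne_natAdd, Fin.natAdd_inj]

lemma wt1_append_zeroVec (y : Fin b → Bool) : wt1 (Fin.append (zeroVec a) y) = wt1 y := by
  rw [wt1_eq_add, show Fin.append (zeroVec a) y ∘ Fin.castAdd b = zeroVec a from
    funext fun _ => by simp, show Fin.append (zeroVec a) y ∘ Fin.natAdd a = y from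
    funext fun _ => by simp, wt1_zeroVec, zero_add]

lemma IsProductForm.comp_append_zeroVec (hf : IsProductForm f) :
    IsProductForm (fun y : Fin b → Bool => f (Fin.append (zeroVec a) y)) := by
  have hcompat : ∀ y, Compatible (fun y => f (Fin.append (zeroVec a) y)) y ↔
      Compatible f (Fin.append (zeroVec a) y) := fun y => by
    simp only [Compatible, append_zeroVec_pairVec]
    refine ⟨fun h i j => ?_, fun h u v hu hv => h _ _ (by simpa using hu) (by simpa using hv)⟩
    refine Fin.addCases (fun u => by simp) (fun u => ?_) i
    refine Fin.addCases (fun v => by simp) (fun v => ?_) j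
    simpa using h u v
  refine ⟨?_, fun y hy => ?_, fun y hy => ?_, fun u v w huw => ?_⟩
  · simpa [append_zeroVec_zeroVec] using hf.apply_zeroVec_ne_zero
  · simp only [hf.apply_of_compatible _ ((hcompat y).1 hy), append_zeroVec_zeroVec,
      wt1_append_zeroVec]
  · exact hf.apply_of_not_compatible _ (mt (hcompat y).2 hy)
  · simp only [append_zeroVec_pairVec]
    exact hf.pairVec_trans _ _ _ ((Fin.natAdd_inj a).not.2 huw)

lemma IsProductForm.inTC_of_leadingFactor {G : (Fin a → Bool) → ℂ} (hf : IsProductForm f)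
    (hG : InS G)
    (hpair : ∀ u v, f (pairVec (Fin.castAdd b u) (Fin.castAdd b v)) ≠ 0 ↔ G (pairVec u v) ≠ 0)
    (hcross : ∀ u w, G (pairVec u u) ≠ 0 → f (pairVec (Fin.natAdd a w) (Fin.natAdd a w)) ≠ 0 →
      f (pairVec (Fin.castAdd b u) (Fin.natAdd a w)) ≠ 0)
    (hrest : b = 0 ∨ InTC (fun y : Fin b → Bool => f (Fin.append (zeroVec a) y))) :
    InTC f := by
  set F := fun y : Fin b → Bool => f (Fin.append (zeroVec a) y)
  have hG' := hG.isProductForm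
  have hF : IsProductForm F := hf.comp_append_zeroVec
  have hF0 : F (zeroVec b) = f (zeroVec (a + b)) := by
    simp only [F, append_zeroVec_zeroVec]
  have hcompat : ∀ x, Compatible f x ↔
      Compatible G (x ∘ Fin.castAdd b) ∧ Compatible F (x ∘ Fin.natAdd a) :=
    compatible_iff_of_pairVec hpair (fun u v => by simp only [F, append_zeroVec_pairVec])
      (fun u w hu hw => hcross u w hu (by simpa only [F, append_zeroVec_pairVec] using hw))
  have hfac : f = fun x => (G (zeroVec a))⁻¹ * _root_.tensorSig G F x := by
    funext x
    change f x = _ * (G (x ∘ Fin.castAdd b) * F (x ∘ Fin.natAdd a))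
    by_cases hx : Compatible f x
    · obtain ⟨h1, h2⟩ := (hcompat x).1 hx
      rw [hf.apply_of_compatible x hx, hG'.apply_of_compatible _ h1, hF.apply_of_compatible _ h2,
        hF0, wt1_eq_add x, pow_add]
      field_simp [hG'.apply_zeroVec_ne_zero]
    · rw [hf.apply_of_not_compatible x hx]
      rcases not_and_or.1 (mt (hcompat x).2 hx) with h | h
      · rw [hG'.apply_of_not_compatible _ h, zero_mul, mul_zero]
      · rw [hF.apply_of_not_compatible _ h, mul_zero, mul_zero]
  rw [hfac]
  refine InTC.const_mul ?_ _
  rcases hrest with rfl | h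
  · exact hG.inTC.tensorSig_arity_zero F
  · exact hG.inTC.tensorSig h

end LeadingFactor

namespace IsProductForm

variable {n : ℕ} {f : (Fin n → Bool) → ℂ}

lemma inTC_of_factor (hf : IsProductForm f) (B : Finset (Fin n)) (hB : B.Nonempty)
    {G : (Fin #B → Bool) → ℂ} (hG : InS G)
    (hpair : ∀ u v, f (pairVec (B.orderEmbOfFin rfl u) (B.orderEmbOfFin rfl v)) ≠ 0 ↔
      G (pairVec u v) ≠ 0)
    (hcross : ∀ u q, q ∉ B → G (pairVec u u) ≠ 0 → f (pairVec q q) ≠ 0 →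
      f (pairVec (B.orderEmbOfFin rfl u) q) ≠ 0)
    (ih : ∀ m < n, 0 < m → ∀ F : (Fin m → Bool) → ℂ, IsProductForm F → InTC F) :
    InTC f := by
  let e : Fin (#B + #Bᶜ) ≃ Fin n := finSumFinEquiv.symm.trans (finSumEquivOfFinset rfl rfl)
  have he_castAdd : ∀ u, e (Fin.castAdd _ u) = B.orderEmbOfFin rfl u := by simp [e]
  have he_natAdd : ∀ w, e (Fin.natAdd _ w) ∉ B := fun w => by
    simpa [e] using mem_compl.1 (Bᶜ.orderEmbOfFin_mem rfl w)
  have hpair_e : ∀ p q, f (pairVec p q ∘ e.symm) = f (pairVec (e p) (e q)) := by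
    simp [pairVec_comp_equiv]
  have hf' := hf.comp_equiv e.symm
  have hrest : #Bᶜ = 0 ∨ InTC (fun y => f (Fin.append (zeroVec #B) y ∘ e.symm)) := by
    refine (Nat.eq_zero_or_pos _).imp_right fun hpos => ih _ ?_ hpos _ hf'.comp_append_zeroVec
    simpa using (card_compl_lt_iff_nonempty B).2 hB
  have h := hf'.inTC_of_leadingFactor hG (by simpa [hpair_e, he_castAdd] using hpair)
    (fun u w hu hw => by
      simpa [hpair_e, he_castAdd] using hcross u _ (he_natAdd w) hu (by simpa [hpair_e] using hw))
    hrest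
  convert h.comp_equiv e with x
  simp [Function.comp_assoc]

lemma inTC_of_apply_pairVec_self_eq_zero (hf : IsProductForm f) {i : Fin n}
    (hi : f (pairVec i i) = 0)
    (ih : ∀ m < n, 0 < m → ∀ F : (Fin m → Bool) → ℂ, IsProductForm F → InTC F) :
    InTC f := by
  let G : (Fin #{i} → Bool) → ℂ := fun z => if wt1 z = 0 then 1 else 0
  have hG0 : ∀ u v, G (pairVec u v) = 0 := fun u v => if_neg fun h => by
    simpa using congrFun (wt1_eq_zero_iff.1 h) u
  have hι : ∀ u, ({i} : Finset (Fin n)).orderEmbOfFin rfl u = i := fun u =>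
    mem_singleton.1 (orderEmbOfFin_mem _ rfl u)
  refine hf.inTC_of_factor {i} (singleton_nonempty i) (G := G)
    (Or.inl ⟨card_singleton i, fun _ => rfl⟩) (fun u v => ?_) (fun u q _ hu => ?_) ih
  · simp [hι, hi, hG0]
  · exact absurd (hG0 u u) hu

lemma inTC_of_apply_pairVec_self_ne_zero (hf : IsProductForm f) {i : Fin n}
    (hi : f (pairVec i i) ≠ 0)
    (ih : ∀ m < n, 0 < m → ∀ F : (Fin m → Bool) → ℂ, IsProductForm F → InTC F) :
    InTC f := by
  let B : Finset (Fin n) := {q | f (pairVec q q) ≠ 0 ∧ (q = i ∨ f (pairVec i q) = 0)}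
  have hiB : i ∈ B := by simp [B, hi]
  have hB_pair : ∀ p ∈ B, ∀ q ∈ B, f (pairVec p q) ≠ 0 ↔ p = q := by
    simp only [B, mem_filter, mem_univ, true_and]
    rintro p ⟨hp, rfl | hpi⟩ q ⟨hq, rfl | hqi⟩
    · simpa using hp
    · exact iff_of_false (not_not.2 hqi) fun h => hq (h ▸ hqi)
    · exact iff_of_false (not_not.2 (pairVec_comm p _ ▸ hpi)) fun h => hp (h ▸ hpi)
    · refine ⟨fun h => by_contra fun hpq => h ?_, fun h => h ▸ hp⟩
      exact hf.pairVec_trans p _ q hpq hp hi hq (pairVec_comm p _ ▸ hpi) hqi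
  have hB_cross : ∀ p ∈ B, ∀ q ∉ B, f (pairVec q q) ≠ 0 → f (pairVec p q) ≠ 0 := by
    simp only [B, mem_filter, mem_univ, true_and, not_and, not_or]
    rintro p ⟨hp, rfl | hpi⟩ q hqB hq hpq
    · exact (hqB hq).2 hpq
    · exact (hqB hq).2 (hf.pairVec_trans _ p q (Ne.symm (hqB hq).1) hi hp hq hpi hpq)
  let G : (Fin #B → Bool) → ℂ := fun z => if wt1 z = 0 then 2 else if wt1 z = 1 then 1 else 0
  have hG : ∀ u v, G (pairVec u v) ≠ 0 ↔ u = v := pairVec_ne_zero_iff_of_g fun _ => rfl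
  refine hf.inTC_of_factor B ⟨i, hiB⟩ (G := G) (Or.inr ⟨card_pos.2 ⟨i, hiB⟩, fun _ => rfl⟩)
    (fun u v => ?_) (fun u q hq _ => hB_cross _ (orderEmbOfFin_mem _ rfl u) q hq) ih
  rw [hG, hB_pair _ (orderEmbOfFin_mem _ rfl u) _ (orderEmbOfFin_mem _ rfl v),
    (B.orderEmbOfFin rfl).injective.eq_iff]

theorem inTC (hf : IsProductForm f) (hn : 0 < n) : InTC f := by
  induction n using Nat.strong_induction_on with
  | _ n ih =>
  have ih' : ∀ m < n, 0 < m → ∀ F : (Fin m → Bool) → ℂ, IsProductForm F → InTC F :=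
    fun m hm hm0 F hF => ih m hm hF hm0
  by_cases hi : f (pairVec ⟨0, hn⟩ ⟨0, hn⟩) = 0
  · exact hf.inTC_of_apply_pairVec_self_eq_zero hi ih'
  · exact hf.inTC_of_apply_pairVec_self_ne_zero hi ih'

end IsProductForm

section Pinning

variable {m : ℕ} {f : (Fin (m + 1) → Bool) → ℂ} (i : Fin (m + 1))

lemma pinSig_removeNth {c : Bool} {x : Fin (m + 1) → Bool} (hx : x i = c) :
    pinSig f i c (i.removeNth x) = f x := by
  subst hx
  simp [pinSig, Fin.insertNth_removeNth]

lemma pinSig_false_zeroVec : pinSig f i false (zeroVec m) = f (zeroVec (m + 1)) := by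
  unfold pinSig; congr 1; rw [Fin.insertNth_eq_iff]; simp [funext_iff, Fin.removeNth]

lemma pinSig_true_zeroVec : pinSig f i true (zeroVec m) = f (pairVec i i) := by
  unfold pinSig; congr 1; rw [Fin.insertNth_eq_iff]
  simp [funext_iff, Fin.removeNth, Fin.succAbove_ne]

lemma pinSig_false_pairVec (u v : Fin m) :
    pinSig f i false (pairVec u v) = f (pairVec (i.succAbove u) (i.succAbove v)) := by
  unfold pinSig; congr 1; rw [Fin.insertNth_eq_iff]
  simp [funext_iff, Fin.removeNth, Ne.symm (Fin.succAbove_ne _ _)]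

lemma pinSig_true_pairVec_self (u : Fin m) :
    pinSig f i true (pairVec u u) = f (pairVec i (i.succAbove u)) := by
  unfold pinSig; congr 1; rw [Fin.insertNth_eq_iff]
  simp [funext_iff, Fin.removeNth, Fin.succAbove_ne, Ne.symm (Fin.succAbove_ne _ _)]

lemma compatible_pinSig_false_iff {x : Fin (m + 1) → Bool} (hx : x i = false) :
    Compatible (pinSig f i false) (i.removeNth x) ↔ Compatible f x := by
  simp [Compatible, Fin.forall_iff_succAbove i, hx, pinSig_false_pairVec, Fin.removeNth]

end Pinning

section FromPinnings

variable {m : ℕ} {f : (Fin (m + 1) → Bool) → ℂ}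

lemma apply_zeroVec_ne_zero_of_eq_false {i : Fin (m + 1)} (hpin : InTC (pinSig f i false))
    {x : Fin (m + 1) → Bool} (hx : f x ≠ 0) (hi : x i = false) : f (zeroVec (m + 1)) ≠ 0 := by
  rw [← pinSig_removeNth (f := f) i hi] at hx
  rw [← pinSig_false_zeroVec (f := f) i]
  exact (hpin.isProductForm_of_ne_zero hx).apply_zeroVec_ne_zero

lemma apply_zeroVec_ne_zero_of_pinSig (hm : 2 ≤ m) (hpin : ∀ i c, InTC (pinSig f i c))
    {x : Fin (m + 1) → Bool} (hx : f x ≠ 0) : f (zeroVec (m + 1)) ≠ 0 := by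
  by_cases hfalse : ∃ i, x i = false
  · obtain ⟨i, hi⟩ := hfalse
    exact apply_zeroVec_ne_zero_of_eq_false (hpin i false) hx hi
  -- Now `x` is the all-ones vector: pinning a variable to `1` gives a product form, which is also
  -- nonzero at the unit vectors, and these are nonzero points of `f` of weight two.
  have hall : ∀ i, x i = true := fun i => by simpa using not_exists.1 hfalse i
  have hx' : pinSig f 0 true (Fin.removeNth 0 x) ≠ 0 := by rwa [pinSig_removeNth 0 (hall 0)]
  have hp := (hpin 0 true).isProductForm_of_ne_zero hx'
  let j : Fin (m + 1) := Fin.succAbove 0 ⟨0, by omega⟩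
  have hj : f (pairVec 0 j) ≠ 0 := by
    rw [← pinSig_true_pairVec_self (f := f)]
    exact hp.apply_ne_zero_iff.1 hx' _ _ (hall _) (hall _)
  obtain ⟨l, hl⟩ := exists_eq_false_of_wt1_lt (x := pairVec 0 j)
    (by rw [wt1_pairVec (Fin.succAbove_ne _ _).symm]; omega)
  exact apply_zeroVec_ne_zero_of_eq_false (hpin l false) hj hl

lemma isProductForm_pinSig_false {i : Fin (m + 1)} (hpin : InTC (pinSig f i false))
    (h0 : f (zeroVec (m + 1)) ≠ 0) : IsProductForm (pinSig f i false) :=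
  hpin.isProductForm_of_ne_zero (x := zeroVec m) (by rwa [pinSig_false_zeroVec])

lemma apply_of_compatible_of_eq_false {i : Fin (m + 1)} (hpin : InTC (pinSig f i false))
    (h0 : f (zeroVec (m + 1)) ≠ 0) {x : Fin (m + 1) → Bool} (hi : x i = false)
    (hx : Compatible f x) : f x = f (zeroVec (m + 1)) * 2⁻¹ ^ wt1 x := by
  rw [← pinSig_removeNth (f := f) i hi, (isProductForm_pinSig_false hpin h0).apply_of_compatible _
    ((compatible_pinSig_false_iff i hi).2 hx), pinSig_false_zeroVec, wt1_eq_removeNth i x, hi]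
  simp

lemma apply_of_not_compatible_of_eq_false {i : Fin (m + 1)} (hpin : InTC (pinSig f i false))
    (h0 : f (zeroVec (m + 1)) ≠ 0) {x : Fin (m + 1) → Bool} (hi : x i = false)
    (hx : ¬ Compatible f x) : f x = 0 := by
  rw [← pinSig_removeNth (f := f) i hi]
  exact (isProductForm_pinSig_false hpin h0).apply_of_not_compatible _
    (mt (compatible_pinSig_false_iff i hi).1 hx)

/-- Pinning the first variable to `1` reduces the all-ones vector to points of weight at most
three, which already have a zero coordinate when there are at least four variables. -/
lemma apply_const_true_of_compatible (hm : 3 ≤ m) (hpin : ∀ i c, InTC (pinSig f i c))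
    (h0 : f (zeroVec (m + 1)) ≠ 0) (hx : Compatible f fun _ => true) :
    f (fun _ => true) = f (zeroVec (m + 1)) * 2⁻¹ ^ (m + 1) := by
  have hpairs : ∀ u v, f (pairVec u v) ≠ 0 := fun u v => hx u v rfl rfl
  have hf₁ : f (pairVec 0 0) = f (zeroVec (m + 1)) * 2⁻¹ := by
    obtain ⟨l, hl⟩ := exists_eq_false_of_wt1_lt (x := pairVec (0 : Fin (m + 1)) 0)
      (by simp; omega)
    rw [apply_of_compatible_of_eq_false (hpin _ false) h0 hl (fun u v _ _ => hpairs u v),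
      wt1_pairVec_self, pow_one]
  have hp := (hpin 0 true).isProductForm_of_ne_zero (x := zeroVec m)
    (by rw [pinSig_true_zeroVec]; exact hpairs 0 0)
  have hpx : Compatible (pinSig f 0 true) fun _ => true := fun u v _ _ => by
    let y : Fin (m + 1) → Bool := Fin.insertNth 0 true (pairVec u v)
    have hy : wt1 y < m + 1 := by
      have := wt1_pairVec_le_two u v
      rw [wt1_eq_removeNth 0 y]
      simp only [y, Fin.insertNth_apply_same, Fin.removeNth_insertNth, if_true]
      omega
    obtain ⟨l, hl⟩ := exists_eq_false_of_wt1_lt hy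
    change f y ≠ 0
    rw [apply_of_compatible_of_eq_false (hpin _ false) h0 hl (fun u v _ _ => hpairs u v)]
    exact mul_ne_zero h0 (by simp)
  rw [← pinSig_removeNth (f := f) 0 rfl]
  change pinSig f 0 true (fun _ => true) = _
  rw [hp.apply_of_compatible _ hpx, pinSig_true_zeroVec, hf₁, wt1_const_true, pow_succ]
  ring

lemma apply_const_true_of_not_compatible (hpin : ∀ i c, InTC (pinSig f i c))
    (hx : ¬ Compatible f fun _ => true) : f (fun _ => true) = 0 := by
  obtain ⟨u, v, huv⟩ : ∃ u v, f (pairVec u v) = 0 := by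
    simpa [Compatible] using hx
  rw [← pinSig_removeNth (f := f) u rfl]
  by_contra hne
  have hp := (hpin u true).isProductForm_of_ne_zero hne
  have hu : f (pairVec u u) ≠ 0 := pinSig_true_zeroVec (f := f) u ▸ hp.apply_zeroVec_ne_zero
  obtain ⟨v', rfl⟩ := Fin.exists_succAbove_eq (x := v) (y := u) (by rintro rfl; exact hu huv)
  exact hp.apply_ne_zero_iff.1 hne v' v' rfl rfl (by rwa [pinSig_true_pairVec_self])

lemma pairVec_trans_of_pinSig (hm : 3 ≤ m) (hpin : ∀ i c, InTC (pinSig f i c))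
    (h0 : f (zeroVec (m + 1)) ≠ 0) (u v w : Fin (m + 1)) (huw : u ≠ w)
    (hu : f (pairVec u u) ≠ 0) (hv : f (pairVec v v) ≠ 0) (hw : f (pairVec w w) ≠ 0)
    (huv : f (pairVec u v) = 0) (hvw : f (pairVec v w) = 0) : f (pairVec u w) = 0 := by
  obtain ⟨l, hl⟩ : ({u, v, w}ᶜ : Finset (Fin (m + 1))).Nonempty := by
    rw [← card_pos, card_compl, Fintype.card_fin]
    have := card_le_three (a := u) (b := v) (c := w)
    omega
  simp only [mem_compl, mem_insert, mem_singleton, not_or] at hl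
  obtain ⟨u', rfl⟩ := Fin.exists_succAbove_eq (Ne.symm hl.1)
  obtain ⟨v', rfl⟩ := Fin.exists_succAbove_eq (Ne.symm hl.2.1)
  obtain ⟨w', rfl⟩ := Fin.exists_succAbove_eq (Ne.symm hl.2.2)
  simp only [← pinSig_false_pairVec (f := f)] at *
  exact (isProductForm_pinSig_false (hpin l false) h0).pairVec_trans u' v' w'
    (fun h => huw (h ▸ rfl)) hu hv hw huv hvw

lemma isProductForm_of_pinSig (hm : 3 ≤ m) (hpin : ∀ i c, InTC (pinSig f i c))
    {x : Fin (m + 1) → Bool} (hx : f x ≠ 0) : IsProductForm f := by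
  have h0 := apply_zeroVec_ne_zero_of_pinSig (by omega) hpin hx
  have hcases : ∀ y : Fin (m + 1) → Bool, (∃ i, y i = false) ∨ y = fun _ => true := fun y => by
    by_cases h : ∃ i, y i = false
    · exact Or.inl h
    · exact Or.inr (funext fun i => by simpa using not_exists.1 h i)
  refine ⟨h0, fun y hy => ?_, fun y hy => ?_, pairVec_trans_of_pinSig hm hpin h0⟩
  · rcases hcases y with ⟨i, hi⟩ | rfl
    · exact apply_of_compatible_of_eq_false (hpin i false) h0 hi hy
    · rw [apply_const_true_of_compatible hm hpin h0 hy, wt1_const_true]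
  · rcases hcases y with ⟨i, hi⟩ | rfl
    · exact apply_of_not_compatible_of_eq_false (hpin i false) h0 hi hy
    · exact apply_const_true_of_not_compatible hpin hy

theorem inTC_of_forall_pinSig (hm : 3 ≤ m) (hpin : ∀ i c, InTC (pinSig f i c)) : InTC f := by
  by_cases hf : ∀ x, f x = 0
  · exact Or.inl hf
  · obtain ⟨x, hx⟩ := not_forall.1 hf
    exact (isProductForm_of_pinSig hm hpin hx).inTC m.succ_pos

end FromPinnings

lemma PinReach.trans {n m k : ℕ} {f : (Fin n → Bool) → ℂ} {g : (Fin m → Bool) → ℂ}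
    {h : (Fin k → Bool) → ℂ} (hfg : PinReach n f m g) (hgh : PinReach m g k h) :
    PinReach n f k h := by
  induction hgh with
  | refl => exact hfg
  | pinStep _ i c ih => exact ih.pinStep i c

/-- if `f ∉ ⟨S⟩`, then by successively pinning variables to
constants one obtains a signature `g` of arity at most `3` with `g ∉ ⟨S⟩`. -/
theorem stmt14 {n : ℕ} (f : (Fin n → Bool) → ℂ) (hf : ¬ InTC f) :
    ∃ (m : ℕ) (g : (Fin m → Bool) → ℂ), m ≤ 3 ∧ PinReach n f m g ∧ ¬ InTC g := by
  induction n using Nat.strong_induction_on with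
  | _ n ih =>
  by_cases hn : n ≤ 3
  · exact ⟨n, f, hn, .refl n f, hf⟩
  obtain ⟨m, rfl⟩ : ∃ m, n = m + 1 := ⟨n - 1, by omega⟩
  obtain ⟨i, c, hic⟩ : ∃ i c, ¬ InTC (pinSig f i c) := by
    by_contra! h
    exact hf (inTC_of_forall_pinSig (by omega) h)
  obtain ⟨k, g, hk, hg, hg'⟩ := ih m m.lt_succ_self (pinSig f i c) hic
  exact ⟨k, g, hk, (PinReach.pinStep (.refl _ f) i c).trans hg, hg'⟩
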